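/- arXiv:2103.09925 — 7 statements merged into one kernel-verified Lean document; each statement's English description precedes it below -/
import Mathlib

section
/- For any nonnegative reals a_{n,l} (n ∈ D, l ∈ {0,...,K}) satisfying the popularity-first ordering a_{φ(i),l} ≥ a_{φ(i+1),l} for all l ∈ {1,...,K} and 1 ≤ i < |D|, the maximum over all bijections π : {1,...,|D|} → D of Σ_{l=0}^{K-1} Σ_{i=1}^{|D|} binom(K-i, l) a_{π(i),l} is attained at π = φ, i.e., equals Σ_{l=0}^{K-1} Σ_{i=1}^{|D|} binom(K-i, l) a_{φ(i),l}. -/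
/-!
The binomial weight `i ↦ C(K - i, l)` is antitone in the position `i`, and by the
popularity-first condition so is `i ↦ a_{φ(i),l}` for `l ≥ 1` (for `l = 0` the weight is
constant). The two therefore monovary on `{1, …, |D|}`, and any other bijection `π` is `φ`
composed with a permutation of the positions, so the rearrangement inequality bounds each
`l`-summand by its value at `φ`.
-/

open Finset Equiv Set

theorem Set.BijOn.exists_perm_eq_comp {ι κ : Type*} {s : Set ι} {t : Set κ} {π φ : ι → κ}
    (hπ : BijOn π s t) (hφ : BijOn φ s t) :
    ∃ σ : Perm ι, {x | σ x ≠ x} ⊆ s ∧ ∀ x ∈ s, π x = φ (σ x) := by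
  classical
  let σ : Perm s := (hπ.equiv π).trans (hφ.equiv φ).symm
  refine ⟨Perm.ofSubtype σ, fun x hx => ?_, fun x hx => ?_⟩
  · by_contra hxs
    exact hx (Perm.ofSubtype_apply_of_not_mem σ hxs)
  · rw [Perm.ofSubtype_apply_of_mem σ hx]
    exact congrArg Subtype.val ((hφ.equiv φ).apply_symm_apply (hπ.equiv π ⟨x, hx⟩)).symm

theorem MonovaryOn.sum_smul_comp_le_sum_smul_of_bijOn {ι κ α β : Type*} [Semiring α]
    [LinearOrder α] [IsStrictOrderedRing α] [ExistsAddOfLE α] [AddCommMonoid β] [LinearOrder β]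
    [IsOrderedCancelAddMonoid β] [Module α β] [PosSMulMono α β] {s : Finset ι} {t : Set κ}
    {f : ι → α} {g : κ → β} {π φ : ι → κ} (hfg : MonovaryOn f (g ∘ φ) s)
    (hπ : BijOn π s t) (hφ : BijOn φ s t) :
    ∑ i ∈ s, f i • g (π i) ≤ ∑ i ∈ s, f i • g (φ i) := by
  obtain ⟨σ, hσ, hπσ⟩ := hπ.exists_perm_eq_comp hφ
  calc ∑ i ∈ s, f i • g (π i) = ∑ i ∈ s, f i • (g ∘ φ) (σ i) :=
        sum_congr rfl fun i hi => by rw [hπσ i hi, Function.comp_apply]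
    _ ≤ ∑ i ∈ s, f i • g (φ i) := hfg.sum_smul_comp_perm_le_sum_smul hσ

theorem Nat.antitone_cast_choose_sub {α : Type*} [AddMonoidWithOne α] [PartialOrder α]
    [AddLeftMono α] [ZeroLEOneClass α] (K l : ℕ) :
    Antitone fun i : ℕ => ((K - i).choose l : α) :=
  fun _ _ hij => Nat.mono_cast (Nat.choose_le_choose l (Nat.sub_le_sub_left hij K))

theorem monovaryOn_choose_sub_of_add_one_le {α β : Type*} [AddMonoidWithOne α] [PartialOrder α]
    [AddLeftMono α] [ZeroLEOneClass α] [Preorder β] (K l n : ℕ) {g : ℕ → β}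
    (hg : 1 ≤ l → ∀ i, 1 ≤ i → i < n → g (i + 1) ≤ g i) :
    MonovaryOn (fun i : ℕ => ((K - i).choose l : α)) g (Finset.Icc 1 n) := by
  rcases Nat.eq_zero_or_pos l with rfl | hl
  · simp only [Nat.choose_zero_right, Nat.cast_one]
    exact monovaryOn_const_left g 1 _
  refine ((Nat.antitone_cast_choose_sub K l).antitoneOn _).monovaryOn ?_
  rw [coe_Icc]
  refine antitoneOn_of_add_one_le ordConnected_Icc fun i _ hi hi' => hg hl i hi.1 ?_
  exact Nat.lt_of_succ_le hi'.2

theorem lb_max_attained_at_popularity_first_general (K : ℕ) (D : Finset ℕ) (a : ℕ → ℕ → ℝ)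
    (φ : ℕ → ℕ) (hφ : Set.BijOn φ (Finset.Icc 1 D.card : Set ℕ) (D : Set ℕ))
    (hpf : ∀ l ∈ Finset.Icc 1 K, ∀ i, 1 ≤ i → i < D.card → a (φ (i + 1)) l ≤ a (φ i) l)
    (π : ℕ → ℕ) (hπ : Set.BijOn π (Finset.Icc 1 D.card : Set ℕ) (D : Set ℕ)) :
    ∑ l ∈ Finset.range K, ∑ i ∈ Finset.Icc 1 D.card,
        (Nat.choose (K - i) l : ℝ) * a (π i) l
      ≤ ∑ l ∈ Finset.range K, ∑ i ∈ Finset.Icc 1 D.card,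
        (Nat.choose (K - i) l : ℝ) * a (φ i) l := by
  refine sum_le_sum fun l hl => ?_
  have hmono := monovaryOn_choose_sub_of_add_one_le (α := ℝ) K l D.card (g := fun i => a (φ i) l)
    fun hl1 => hpf l (mem_Icc.2 ⟨hl1, (mem_range.1 hl).le⟩)
  exact hmono.sum_smul_comp_le_sum_smul_of_bijOn (g := fun n => a n l) hπ hφ

/-- Under the popularity-first ordering, the maximum over all bijections `π : {1,...,|D|} → D`
of `∑_{l=0}^{K-1} ∑_{i=1}^{|D|} C(K-i,l) a_{π(i),l}` is attained at the popularity-order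
bijection `φ`. -/
theorem lb_max_attained_at_popularity_first (K : ℕ) (D : Finset ℕ) (hD : D.card ≤ K)
    (hDne : D.Nonempty) (a : ℕ → ℕ → ℝ)
    (ha : ∀ n ∈ D, ∀ l ≤ K, 0 ≤ a n l)
    (φ : ℕ → ℕ) (hφ : Set.BijOn φ (Finset.Icc 1 D.card : Set ℕ) (D : Set ℕ))
    (hpf : ∀ l ∈ Finset.Icc 1 K, ∀ i, 1 ≤ i → i < D.card → a (φ (i + 1)) l ≤ a (φ i) l)
    (π : ℕ → ℕ) (hπ : Set.BijOn π (Finset.Icc 1 D.card : Set ℕ) (D : Set ℕ)) :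
    ∑ l ∈ Finset.range K, ∑ i ∈ Finset.Icc 1 D.card,
        (Nat.choose (K - i) l : ℝ) * a (π i) l
      ≤ ∑ l ∈ Finset.range K, ∑ i ∈ Finset.Icc 1 D.card,
        (Nat.choose (K - i) l : ℝ) * a (φ i) l :=
  lb_max_attained_at_popularity_first_general K D a φ hφ hpf π hπ
end

section
/- Telescoping identity for the MCCS rate with redundant requests: for any demand with Ñ distinct files and redundancy counts N̂(0) = 0 ≤ N̂(1) ≤ ... ≤ N̂(Ñ), the sum over popularity ranks of the grouped message sizes satisfies Σ_{i=1}^{Ñ} Σ_{S ∈ Ã_i^{l+1}} (message size) = Σ_{i=1}^{Ñ} [ Σ_{j=i}^{Ñ} binom(K - j - N̂(i-1), l) − Σ_{j=i+1}^{Ñ} binom(K - j - N̂(i), l) ] a_{φ(i),l}, where message sizes are determined by the most popular file requested within each subset. -/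
open Classical

/-- `Ã_i^{l+1}`: the size-`(l+1)` subsets of `{1,...,K}` containing the leader `ψ(i)` and
none of the leaders `ψ(1),...,ψ(i-1)`. -/
noncomputable def leaderFamily (K l i : ℕ) (ψ : ℕ → ℕ) : Finset (Finset ℕ) :=
  (Finset.Icc 1 K).powerset.filter
    (fun S => S.card = l + 1 ∧ ψ i ∈ S ∧ ∀ j ∈ Finset.Ico 1 i, ψ j ∉ S)

theorem leaderFamily_nonempty {K l i : ℕ} {ψ : ℕ → ℕ} {S : Finset ℕ}
    (h : S ∈ leaderFamily K l i ψ) : S.Nonempty := by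
  classical
  simp only [leaderFamily, Finset.mem_filter] at h
  exact ⟨ψ i, h.2.2.1⟩

/-!
Group the messages of `Ã_i^{l+1}` by the rank `m` of the most popular file requested in the
subset. A subset has minimum rank at least `m` exactly when it consists of `ψ(i)` and `l` users
that are neither leaders `ψ(1),…,ψ(i)` nor among the `N̂(m-1)` redundant requesters of
`φ(1),…,φ(m-1)`; there are `C(K-i-N̂(m-1), l)` of these, so the number of subsets of minimum rank
exactly `m` is a difference of two binomials. Exchanging the sums over `i` and `m` gives the
coefficients of the claim, the term `i = m` of the second sum vanishing because `ψ(m)` has rank `m`.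
-/

open Finset

namespace Finset

variable {α : Type*}

theorem card_filter_le_eq_card_filter_eq_add (s : Finset α) (g : α → ℕ) (m : ℕ) :
    #{x ∈ s | m ≤ g x} = #{x ∈ s | g x = m} + #{x ∈ s | m + 1 ≤ g x} := by
  rw [← card_union_of_disjoint (disjoint_filter.2 fun _ _ h => by omega), ← filter_or]
  exact congrArg card (filter_congr fun x _ => by omega)

theorem sum_comp_eq_sum_Icc_mul_card_filter {R : Type*} [Ring R] (s : Finset α) (g : α → ℕ)
    (f : ℕ → R) {a b : ℕ} (hg : ∀ x ∈ s, g x ∈ Icc a b) :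
    ∑ x ∈ s, f (g x)
      = ∑ m ∈ Icc a b, ((#{x ∈ s | m ≤ g x} : R) - #{x ∈ s | m + 1 ≤ g x}) * f m := by
  rw [← sum_fiberwise_of_maps_to hg]
  refine sum_congr rfl fun m _ => ?_
  rw [sum_congr rfl fun x hx => by rw [(mem_filter.1 hx).2], sum_const, nsmul_eq_mul,
    card_filter_le_eq_card_filter_eq_add s g m, Nat.cast_add, add_sub_cancel_right]

theorem card_filter_mem_powersetCard_succ_insert [DecidableEq α] {a : α} {s : Finset α}
    (ha : a ∉ s) (n : ℕ) :
    #{t ∈ powersetCard (n + 1) (insert a s) | a ∈ t} = (#s).choose n := by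
  rw [powersetCard_succ_insert ha, filter_union,
    filter_false_of_mem fun t ht hat => ha ((mem_powersetCard.1 ht).1 hat),
    filter_true_of_mem fun t ht => by
      obtain ⟨u, -, rfl⟩ := mem_image.1 ht
      exact mem_insert_self a u,
    empty_union, card_image_of_injOn, card_powersetCard]
  exact insert_erase_invOn.2.injOn.mono fun t ht => notMem_mono (mem_powersetCard.1 ht).1 ha

end Finset

section LeaderFamily

variable {K Ntil l : ℕ} {ψ r : ℕ → ℕ}

theorem mem_leaderFamily {i : ℕ} {S : Finset ℕ} :
    S ∈ leaderFamily K l i ψ ↔ S ⊆ Icc 1 K ∧ #S = l + 1 ∧ ψ i ∈ S ∧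
      ∀ j ∈ Ico 1 i, ψ j ∉ S := by
  simp [leaderFamily]

theorem sum_attach_leaderFamily_eq_sum_Icc (hr : ∀ k ∈ Icc 1 K, 1 ≤ r k) {i : ℕ}
    (hrψ : r (ψ i) = i) (f : ℕ → ℝ) :
    ∑ S ∈ (leaderFamily K l i ψ).attach, f (S.1.inf' (leaderFamily_nonempty S.2) r)
      = ∑ m ∈ Icc 1 i, ((#{S ∈ leaderFamily K l i ψ | ∀ k ∈ S, m ≤ r k} : ℝ)
          - #{S ∈ leaderFamily K l i ψ | ∀ k ∈ S, m + 1 ≤ r k}) * f m := by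
  have hmin : ∀ S ∈ (leaderFamily K l i ψ).attach,
      S.1.inf' (leaderFamily_nonempty S.2) r ∈ Icc 1 i := by
    rintro ⟨S, hS⟩ -
    obtain ⟨hSK, -, hψi, -⟩ := mem_leaderFamily.1 hS
    refine mem_Icc.2 ⟨(le_inf'_iff _ _).2 fun k hk => hr k (hSK hk), ?_⟩
    exact (inf'_le r hψi).trans_eq hrψ
  have hcard : ∀ m, #{S ∈ (leaderFamily K l i ψ).attach |
      m ≤ S.1.inf' (leaderFamily_nonempty S.2) r}
        = #{S ∈ leaderFamily K l i ψ | ∀ k ∈ S, m ≤ r k} := fun m => by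
    rw [filter_congr fun S _ => le_inf'_iff _ _]
    convert congrArg card (filter_attach (fun S : Finset ℕ => ∀ k ∈ S, m ≤ r k) _) using 1
    rw [card_map, card_attach]
  rw [sum_comp_eq_sum_Icc_mul_card_filter _ _ f hmin]
  simp only [hcard]

theorem card_filter_rank_ge_notMem_image_leaders
    (hψmem : ∀ i ∈ Icc 1 Ntil, ψ i ∈ Icc 1 K) (hψinj : Set.InjOn ψ (Icc 1 Ntil : Set ℕ))
    (hrψ : ∀ i ∈ Icc 1 Ntil, r (ψ i) = i) {i m : ℕ} (hm : 1 ≤ m) (hmi : m ≤ i)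
    (hiN : i ≤ Ntil) :
    #{k ∈ Icc 1 K | m ≤ r k ∧ k ∉ (Icc 1 i).image ψ}
      = K - i - #{k ∈ Icc 1 K \ (Icc 1 Ntil).image ψ | r k ≤ m - 1} := by
  set L := (Icc 1 i).image ψ
  set R := {k ∈ Icc 1 K \ (Icc 1 Ntil).image ψ | r k ≤ m - 1}
  have hIcc : Icc 1 i ⊆ Icc 1 Ntil := Icc_subset_Icc_right hiN
  have hL : #L = i := by
    rw [card_image_of_injOn (hψinj.mono (by exact_mod_cast hIcc)), Nat.card_Icc,
      Nat.add_sub_cancel]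
  have hLR : Disjoint L R := disjoint_left.2 fun k hkL hkR =>
    (mem_sdiff.1 (mem_filter.1 hkR).1).2 (image_subset_image hIcc hkL)
  have hcompl : {k ∈ Icc 1 K | ¬(m ≤ r k ∧ k ∉ L)} = L ∪ R := by
    ext k
    simp only [mem_filter, mem_union, mem_sdiff, R, not_and, not_not]
    constructor
    · rintro ⟨hk, hkL⟩
      by_cases hmk : m ≤ r k
      · exact Or.inl (hkL hmk)
      by_cases hkN : k ∈ (Icc 1 Ntil).image ψ
      · obtain ⟨j, hj, rfl⟩ := mem_image.1 hkN
        rw [hrψ j hj] at hmk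
        exact Or.inl (mem_image_of_mem ψ (mem_Icc.2 ⟨(mem_Icc.1 hj).1, by omega⟩))
      · exact Or.inr ⟨⟨hk, hkN⟩, by omega⟩
    · rintro (hkL | ⟨⟨hk, -⟩, hrk⟩)
      · obtain ⟨j, hj, rfl⟩ := mem_image.1 hkL
        exact ⟨hψmem j (hIcc hj), fun _ => hkL⟩
      · exact ⟨hk, fun hmk => by omega⟩
  have hsplit := card_filter_add_card_filter_not (s := Icc 1 K) (fun k => m ≤ r k ∧ k ∉ L)
  rw [hcompl, card_union_of_disjoint hLR, hL, Nat.card_Icc] at hsplit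
  omega

theorem card_leaderFamily_filter_rank_ge
    (hψmem : ∀ i ∈ Icc 1 Ntil, ψ i ∈ Icc 1 K) (hψinj : Set.InjOn ψ (Icc 1 Ntil : Set ℕ))
    (hrψ : ∀ i ∈ Icc 1 Ntil, r (ψ i) = i) {i m : ℕ} (hm : 1 ≤ m) (hmi : m ≤ i)
    (hiN : i ≤ Ntil) :
    #{S ∈ leaderFamily K l i ψ | ∀ k ∈ S, m ≤ r k}
      = (K - i - #{k ∈ Icc 1 K \ (Icc 1 Ntil).image ψ | r k ≤ m - 1}).choose l := by
  set G := {k ∈ Icc 1 K | m ≤ r k ∧ k ∉ (Icc 1 i).image ψ}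
  have hi : i ∈ Icc 1 Ntil := mem_Icc.2 ⟨hm.trans hmi, hiN⟩
  have hψiG : ψ i ∉ G := fun h =>
    (mem_filter.1 h).2.2 (mem_image_of_mem ψ (mem_Icc.2 ⟨hm.trans hmi, le_rfl⟩))
  suffices h : {S ∈ leaderFamily K l i ψ | ∀ k ∈ S, m ≤ r k}
      = {S ∈ powersetCard (l + 1) (insert (ψ i) G) | ψ i ∈ S} by
    rw [h, card_filter_mem_powersetCard_succ_insert hψiG,
      card_filter_rank_ge_notMem_image_leaders hψmem hψinj hrψ hm hmi hiN]
  ext S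
  simp only [mem_filter, mem_leaderFamily, mem_powersetCard, subset_iff, mem_insert, G]
  constructor
  · rintro ⟨⟨hSK, hcard, hψi, hlead⟩, hrank⟩
    refine ⟨⟨fun k hk => ?_, hcard⟩, hψi⟩
    by_cases hki : k = ψ i
    · exact Or.inl hki
    refine Or.inr ⟨hSK hk, hrank k hk, fun hkL => ?_⟩
    obtain ⟨j, hj, rfl⟩ := mem_image.1 hkL
    obtain ⟨hj1, hji⟩ := mem_Icc.1 hj
    rcases hji.lt_or_eq with hji | rfl
    · exact hlead j (mem_Ico.2 ⟨hj1, hji⟩) hk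
    · exact hki rfl
  · rintro ⟨⟨hSG, hcard⟩, hψi⟩
    refine ⟨⟨fun k hk => ?_, hcard, hψi, fun j hj hjS => ?_⟩, fun k hk => ?_⟩
    · rcases hSG hk with rfl | hkG
      · exact hψmem i hi
      · exact hkG.1
    · obtain ⟨hj1, hji⟩ := mem_Ico.1 hj
      rcases hSG hjS with hjψ | hjG
      · exact hji.ne (hψinj (mem_Icc.2 ⟨hj1, by omega⟩) hi hjψ)
      · exact hjG.2.2 (mem_image_of_mem ψ (mem_Icc.2 ⟨hj1, hji.le⟩))
    · rcases hSG hk with rfl | hkG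
      · exact (hrψ i hi).symm ▸ hmi
      · exact hkG.2.1

theorem card_leaderFamily_filter_rank_ge_eq_zero {i m : ℕ} (hrψ : r (ψ i) = i) (him : i < m) :
    #{S ∈ leaderFamily K l i ψ | ∀ k ∈ S, m ≤ r k} = 0 := by
  refine card_eq_zero.2 (filter_eq_empty_iff.2 fun S hS hrank => ?_)
  have := hrank (ψ i) (mem_leaderFamily.1 hS).2.2.1
  omega

end LeaderFamily

/-- Users are `{1,...,K}`; user `k` requests the file `φ (r k)` of popularity rank `r k`, the
leader `ψ i` requests `φ i`, and `hatN i` counts the redundant requests for `φ 1, ..., φ i`. -/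
theorem mccs_rate_telescoping_general (K Ntil l : ℕ) (ψ r φ : ℕ → ℕ) (a : ℕ → ℕ → ℝ) (hatN : ℕ → ℕ)
    (hψmem : ∀ i ∈ Finset.Icc 1 Ntil, ψ i ∈ Finset.Icc 1 K)
    (hψinj : Set.InjOn ψ (Finset.Icc 1 Ntil : Set ℕ))
    (hr : ∀ k ∈ Finset.Icc 1 K, r k ∈ Finset.Icc 1 Ntil)
    (hrψ : ∀ i ∈ Finset.Icc 1 Ntil, r (ψ i) = i)
    (hhat : ∀ i, hatN i =
      (((Finset.Icc 1 K) \ (Finset.Icc 1 Ntil).image ψ).filter (fun k => r k ≤ i)).card) :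
    ∑ i ∈ Finset.Icc 1 Ntil,
        ∑ S ∈ (leaderFamily K l i ψ).attach,
          a (φ (S.1.inf' (leaderFamily_nonempty S.2) r)) l
      = ∑ i ∈ Finset.Icc 1 Ntil,
          ((∑ j ∈ Finset.Icc i Ntil, (Nat.choose (K - j - hatN (i - 1)) l : ℝ))
            - ∑ j ∈ Finset.Icc (i + 1) Ntil, (Nat.choose (K - j - hatN i) l : ℝ))
            * a (φ i) l := by
  have hcount : ∀ {i m : ℕ}, 1 ≤ m → m ≤ i → i ≤ Ntil →
      #{S ∈ leaderFamily K l i ψ | ∀ k ∈ S, m ≤ r k} = (K - i - hatN (m - 1)).choose l :=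
    fun hm hmi hiN => by rw [hhat, card_leaderFamily_filter_rank_ge hψmem hψinj hrψ hm hmi hiN]
  rw [sum_congr rfl fun i hi => sum_attach_leaderFamily_eq_sum_Icc
    (fun k hk => (mem_Icc.1 (hr k hk)).1) (hrψ i hi) fun m => a (φ m) l,
    sum_comm' (s' := fun m => Icc m Ntil) (t' := Icc 1 Ntil) fun i m => by
      simp only [mem_Icc]; omega]
  refine sum_congr rfl fun m hm => ?_
  obtain ⟨hm1, hmN⟩ := mem_Icc.1 hm
  rw [← sum_mul, sum_sub_distrib]
  congr 2
  · exact sum_congr rfl fun i hi => by rw [hcount hm1 (mem_Icc.1 hi).1 (mem_Icc.1 hi).2]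
  · rw [← insert_Icc_add_one_left_eq_Icc hmN, sum_insert (by simp),
      card_leaderFamily_filter_rank_ge_eq_zero (hrψ m hm) (Nat.lt_add_one m), Nat.cast_zero,
      zero_add]
    exact sum_congr rfl fun i hi => by
      rw [hcount (by omega) (mem_Icc.1 hi).1 (mem_Icc.1 hi).2, Nat.add_sub_cancel]

/-- Lemma 3 (telescoping identity for the MCCS rate with redundant requests).
Users are `{1,...,K}`; `r k ∈ {1,...,Ñ}` is the popularity rank of the file `φ(r k)` requested
by user `k`; `ψ(i)` is the leader requesting file `φ(i)`; `N̂(i)` is the number of redundant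
(non-leader) requests for files `φ(1),...,φ(i)`.  The sum over popularity ranks `i` of the
zero-padded message sizes (each message's size is that of the subfile of the most popular file
requested within the subset) over the families `Ã_i^{l+1}` equals
`∑_i [∑_{j=i}^{Ñ} C(K-j-N̂(i-1),l) − ∑_{j=i+1}^{Ñ} C(K-j-N̂(i),l)] a_{φ(i),l}`. -/
theorem mccs_rate_telescoping (K Ntil l : ℕ) (hK : 1 ≤ K) (hN : 1 ≤ Ntil) (hNK : Ntil ≤ K)
    (hl : l ≤ K - 1) (ψ r φ : ℕ → ℕ) (a : ℕ → ℕ → ℝ) (hatN : ℕ → ℕ)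
    (hψmem : ∀ i ∈ Finset.Icc 1 Ntil, ψ i ∈ Finset.Icc 1 K)
    (hψinj : Set.InjOn ψ (Finset.Icc 1 Ntil : Set ℕ))
    (hr : ∀ k ∈ Finset.Icc 1 K, r k ∈ Finset.Icc 1 Ntil)
    (hrψ : ∀ i ∈ Finset.Icc 1 Ntil, r (ψ i) = i)
    (hhat : ∀ i, hatN i =
      (((Finset.Icc 1 K) \ (Finset.Icc 1 Ntil).image ψ).filter (fun k => r k ≤ i)).card)
    (horder : ∀ i, 1 ≤ i → i < Ntil → a (φ (i + 1)) l ≤ a (φ i) l)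
    (hann : ∀ n l', 0 ≤ a n l') :
    ∑ i ∈ Finset.Icc 1 Ntil,
        ∑ S ∈ (leaderFamily K l i ψ).attach,
          a (φ (S.1.inf' (leaderFamily_nonempty S.2) r)) l
      = ∑ i ∈ Finset.Icc 1 Ntil,
          ((∑ j ∈ Finset.Icc i Ntil, (Nat.choose (K - j - hatN (i - 1)) l : ℝ))
            - ∑ j ∈ Finset.Icc (i + 1) Ntil, (Nat.choose (K - j - hatN i) l : ℝ))
            * a (φ i) l :=
  mccs_rate_telescoping_general K Ntil l ψ r φ a hatN hψmem hψinj hr hrψ hhat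
end

section
/- If all files have identical placement vectors (a_{1,l} = ... = a_{N,l} for every l), then for every demand vector d the MCCS rate and lower bound coincide: R_MCCS(d; a) = R_lb(D; a) = Σ_{l=0}^{K-1} Σ_{i=1}^{Ñ(d)} binom(K-i, l) a_{1,l}, where Ñ(d) is the number of distinct files requested. -/
/-!
With identical placement vectors every user of a subset `S` sees the same message size
`a₁,|S|-1`, so the maximum over `S` collapses and the rate only counts the subsets of each size
`l + 1` that meet the leader group `U`. Those are all `C(K, l+1)` subsets except the
`C(K - |U|, l+1)` avoiding `U`, and Pascal's rule telescopes this difference into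
`∑_{i=1}^{|U|} C(K-i, l)`.
-/

open Finset

theorem Nat.sum_Icc_choose_sub_add_choose (K l : ℕ) {m : ℕ} (hm : m ≤ K) :
    ∑ i ∈ Icc 1 m, (K - i).choose l + (K - m).choose (l + 1) = K.choose (l + 1) := by
  induction m with
  | zero => simp
  | succ m ih =>
    have pascal : (K - (m + 1)).choose l + (K - (m + 1)).choose (l + 1)
        = (K - m).choose (l + 1) := by
      rw [show K - m = K - (m + 1) + 1 by omega, Nat.choose_succ_succ]
    rw [sum_Icc_succ_top (by omega)]
    have := ih (by omega)
    omega

variable {α : Type*} [DecidableEq α] {A U : Finset α}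

theorem card_powersetCard_filter_inter_nonempty_add_choose (hU : U ⊆ A) (n : ℕ) :
    #{S ∈ powersetCard n A | (S ∩ U).Nonempty} + (#A - #U).choose n = (#A).choose n := by
  have avoiding : {S ∈ powersetCard n A | ¬(S ∩ U).Nonempty} = powersetCard n (A \ U) := by
    ext S
    simp only [mem_filter, mem_powersetCard, not_nonempty_iff_eq_empty, subset_sdiff,
      ← disjoint_iff_inter_eq_empty]
    tauto
  rw [← card_sdiff_of_subset hU, ← card_powersetCard, ← card_powersetCard, ← avoiding,
    card_filter_add_card_filter_not]

theorem card_powersetCard_succ_filter_inter_nonempty (hU : U ⊆ A) (l : ℕ) :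
    #{S ∈ powersetCard (l + 1) A | (S ∩ U).Nonempty} = ∑ i ∈ Icc 1 #U, (#A - i).choose l := by
  have h₁ := card_powersetCard_filter_inter_nonempty_add_choose hU (l + 1)
  have h₂ := Nat.sum_Icc_choose_sub_add_choose #A l (card_le_card hU)
  omega

theorem sum_powerset_filter_inter_nonempty {M : Type*} [AddCommMonoid M] (hU : U ⊆ A)
    (f : ℕ → M) :
    ∑ S ∈ A.powerset with (S ∩ U).Nonempty, f (#S - 1)
      = ∑ l ∈ range #A, (∑ i ∈ Icc 1 #U, (#A - i).choose l) • f l := by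
  have card_mem : ∀ S ∈ {S ∈ A.powerset | (S ∩ U).Nonempty}, 1 ≤ #S ∧ #S ≤ #A := fun S hS ↦
    have hS := mem_filter.mp hS
    ⟨card_pos.mpr (hS.2.mono inter_subset_left), card_le_card (mem_powerset.mp hS.1)⟩
  rw [← sum_fiberwise_of_maps_to (g := fun S ↦ #S - 1) (t := range #A)
    (fun S hS ↦ mem_range.mpr (by have := card_mem S hS; omega))]
  refine sum_congr rfl fun l _ ↦ ?_
  have fiber : {S ∈ {S ∈ A.powerset | (S ∩ U).Nonempty} | #S - 1 = l}
      = {S ∈ powersetCard (l + 1) A | (S ∩ U).Nonempty} := by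
    ext S
    simp only [mem_filter, mem_powerset, mem_powersetCard]
    constructor
    · rintro ⟨⟨hSA, hSU⟩, hl⟩
      have := card_pos.mpr (hSU.mono inter_subset_left)
      exact ⟨⟨hSA, by omega⟩, hSU⟩
    · rintro ⟨⟨hSA, hS⟩, hSU⟩
      exact ⟨⟨hSA, hSU⟩, by omega⟩
  rw [sum_congr rfl fun S hS ↦ congrArg f (mem_filter.mp hS).2, sum_const, fiber,
    card_powersetCard_succ_filter_inter_nonempty hU]

theorem identical_placement_rate_eq_lb_general (K : ℕ)
    (d : ℕ → ℕ)
    (U : Finset ℕ) (hU : U ⊆ Finset.Icc 1 K)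
    (hUcard : U.card = ((Finset.Icc 1 K).image d).card)
    (a : ℕ → ℕ → ℝ)
    (hsym : ∀ n l, a n l = a 1 l) :
    ∑ S ∈ ((Finset.Icc 1 K).powerset.filter (fun S => (S ∩ U).Nonempty)).attach,
        S.1.sup' ((Finset.mem_filter.mp S.2).2.mono Finset.inter_subset_left)
          (fun k => a (d k) (S.1.card - 1))
      = ∑ l ∈ Finset.range K, ∑ i ∈ Finset.Icc 1 ((Finset.Icc 1 K).image d).card,
          (Nat.choose (K - i) l : ℝ) * a 1 l := by
  simp only [hsym, sup'_const]
  rw [sum_attach _ fun S ↦ a 1 (#S - 1), sum_powerset_filter_inter_nonempty hU, Nat.card_Icc,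
    Nat.add_sub_cancel, ← hUcard]
  simp only [nsmul_eq_mul, Nat.cast_sum, sum_mul]

/-- If all files have identical placement vectors (`a_{n,l} = a_{1,l}` for every `n,l`), then
for every demand vector `d` the MCCS rate (sum of zero-padded message sizes over all user
subsets intersecting the leader group `U`) equals the lower bound
`∑_{l=0}^{K-1} ∑_{i=1}^{Ñ(d)} C(K-i,l) a_{1,l}`, where `Ñ(d)` is the number of distinct
requested files. -/
theorem identical_placement_rate_eq_lb (K N : ℕ) (hK : 1 ≤ K) (hN : 1 ≤ N)
    (d : ℕ → ℕ) (hd : ∀ k ∈ Finset.Icc 1 K, d k ∈ Finset.Icc 1 N)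
    (U : Finset ℕ) (hU : U ⊆ Finset.Icc 1 K)
    (hUcard : U.card = ((Finset.Icc 1 K).image d).card)
    (hUleader : U.image d = (Finset.Icc 1 K).image d)
    (a : ℕ → ℕ → ℝ) (ha : ∀ n l, 0 ≤ a n l)
    (hsym : ∀ n l, a n l = a 1 l) :
    ∑ S ∈ ((Finset.Icc 1 K).powerset.filter (fun S => (S ∩ U).Nonempty)).attach,
        S.1.sup' ((Finset.mem_filter.mp S.2).2.mono Finset.inter_subset_left)
          (fun k => a (d k) (S.1.card - 1))
      = ∑ l ∈ Finset.range K, ∑ i ∈ Finset.Icc 1 ((Finset.Icc 1 K).image d).card,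
          (Nat.choose (K - i) l : ℝ) * a 1 l :=
  identical_placement_rate_eq_lb_general K d U hU hUcard a hsym
end

section
/- Two-file-group Case-1 placement feasibility: for n_0 ∈ {1,...,N−1}, integers l_0 with ⌊KM/N⌋+1 ≤ l_0 ≤ min{K, ⌈KM/n_0⌉−1}, the placement a_{n,l_0} = 1/binom(K,l_0) for n ≤ n_0, a_{n,0} = 1 − (KM/l_0 − n_0)/(N − n_0) and a_{n,l_0} = (1/binom(K,l_0))·(KM/l_0 − n_0)/(N − n_0) for n > n_0 (all other entries 0) satisfies Σ_l binom(K,l) a_{n,l} = 1 for every n, Σ_{n=1}^{N} Σ_{l=1}^{K} binom(K−1,l−1) a_{n,l} = M, and 0 ≤ a_{n,l} for all n, l. -/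
/-! A file that caches the fraction `s` of itself, split evenly over the `C(K, l₀)` user subsets of
size `l₀`, occupies `C(K−1, l₀−1) · s / C(K, l₀) = (l₀/K) · s` of each user's memory. Files
`1, …, n₀` are cached whole and the others to the fraction `t = (KM/l₀ − n₀)/(N − n₀)`, so the
memory used is `(l₀/K)(n₀ + (N − n₀) t) = M`; the range of `l₀` is exactly what gives
`n₀ < KM/l₀ < N`, i.e. `0 < t < 1`. -/

open Finset

noncomputable def levelPlacement (K l : ℕ) (s : ℝ) (j : ℕ) : ℝ :=
  if j = 0 then 1 - s else if j = l then s / (K.choose l : ℝ) else 0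

section levelPlacement

variable {K l : ℕ} (s : ℝ)

theorem sum_choose_mul_levelPlacement (hl : l ≠ 0) (hlK : l ≤ K) :
    ∑ j ∈ range (K + 1), (K.choose j : ℝ) * levelPlacement K l s j = 1 := by
  have hC : (K.choose l : ℝ) ≠ 0 := by exact_mod_cast (Nat.choose_pos hlK).ne'
  have hterm : ∀ j ∈ range (K + 1), (K.choose j : ℝ) * levelPlacement K l s j =
      (if j = 0 then 1 - s else 0) + (if j = l then s else 0) := by
    intro j _
    by_cases h0 : j = 0
    · simp [levelPlacement, h0, Ne.symm hl]
    · by_cases hjl : j = l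
      · simp [levelPlacement, hjl, hl, mul_div_cancel₀ _ hC]
      · simp [levelPlacement, h0, hjl]
  rw [sum_congr rfl hterm, sum_add_distrib, sum_ite_eq', sum_ite_eq',
    if_pos (by simp), if_pos (by simpa using Nat.lt_succ_of_le hlK)]
  ring

theorem cast_choose_pred_eq (hl : l ≠ 0) (hlK : l ≤ K) :
    ((K - 1).choose (l - 1) : ℝ) = l / K * K.choose l := by
  obtain ⟨k, rfl⟩ := Nat.exists_eq_add_one_of_ne_zero (show K ≠ 0 by omega)
  obtain ⟨i, rfl⟩ := Nat.exists_eq_add_one_of_ne_zero hl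
  have h : ((k + 1 : ℕ) : ℝ) * k.choose i = (k + 1).choose (i + 1) * (i + 1 : ℕ) := by
    exact_mod_cast Nat.add_one_mul_choose_eq k i
  rw [Nat.add_sub_cancel, Nat.add_sub_cancel]
  field_simp
  linear_combination h

theorem sum_choose_pred_mul_levelPlacement (hl : l ≠ 0) (hlK : l ≤ K) :
    ∑ j ∈ Icc 1 K, ((K - 1).choose (j - 1) : ℝ) * levelPlacement K l s j = l / K * s := by
  have hC : (K.choose l : ℝ) ≠ 0 := by exact_mod_cast (Nat.choose_pos hlK).ne'
  rw [sum_eq_single_of_mem l (by simp; omega)]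
  · simp only [levelPlacement, if_neg hl, if_true, cast_choose_pred_eq hl hlK]
    field_simp
  · intro j hj hjl
    have hj0 : j ≠ 0 := by simp at hj; omega
    simp [levelPlacement, hj0, hjl]

theorem levelPlacement_nonneg (hs₀ : 0 ≤ s) (hs₁ : s ≤ 1) (j : ℕ) :
    0 ≤ levelPlacement K l s j := by
  unfold levelPlacement
  split_ifs <;> first | linarith | positivity

end levelPlacement

theorem sum_Icc_one_ite_le {n₀ N : ℕ} (h : n₀ ≤ N) (x y : ℝ) :
    ∑ n ∈ Icc 1 N, (if n ≤ n₀ then x else y) = n₀ * x + ((N : ℝ) - n₀) * y := by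
  rw [show Icc 1 N = Ioc 0 N from Icc_add_one_left_eq_Ioc 0 N,
    ← sum_Ioc_consecutive _ n₀.zero_le h,
    sum_congr rfl fun n hn => if_pos (mem_Ioc.mp hn).2,
    sum_congr rfl fun n hn => if_neg (not_le.mpr (mem_Ioc.mp hn).1)]
  simp [Nat.cast_sub h]

theorem div_lt_of_floor_div_lt {x N : ℝ} {l : ℕ} (hN : 0 < N) (hl : 0 < l)
    (h : ⌊x / N⌋₊ < l) : x / l < N := by
  have := Nat.lt_of_floor_lt h
  rw [div_lt_iff₀ hN] at this
  rw [div_lt_iff₀ (by exact_mod_cast hl)]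
  linarith

theorem lt_div_of_lt_ceil_div {x n : ℝ} {l : ℕ} (hn : 0 < n) (hl : 0 < l)
    (h : l < ⌈x / n⌉₊) : n < x / l := by
  have := Nat.lt_ceil.mp h
  rw [lt_div_iff₀ hn] at this
  rw [lt_div_iff₀ (by exact_mod_cast hl)]
  linarith

theorem two_group_case1_feasible_general (K N n₀ l₀ : ℕ) (M : ℝ) (hn₀1 : 1 ≤ n₀) (hn₀N : n₀ ≤ N - 1)
    (hl₀lb : Nat.floor ((K : ℝ) * M / N) + 1 ≤ l₀)
    (hl₀ub : l₀ ≤ min K (Nat.ceil ((K : ℝ) * M / n₀) - 1))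
    (a : ℕ → ℕ → ℝ)
    (hadef : ∀ n l, a n l =
      if n ≤ n₀ then (if l = l₀ then 1 / (Nat.choose K l₀ : ℝ) else 0)
      else if l = 0 then 1 - ((K : ℝ) * M / l₀ - n₀) / ((N : ℝ) - n₀)
      else if l = l₀ then (1 / (Nat.choose K l₀ : ℝ)) * (((K : ℝ) * M / l₀ - n₀) / ((N : ℝ) - n₀))
      else 0) :
    (∀ n ∈ Finset.Icc 1 N, ∑ l ∈ Finset.range (K + 1), (Nat.choose K l : ℝ) * a n l = 1)
    ∧ (∑ n ∈ Finset.Icc 1 N, ∑ l ∈ Finset.Icc 1 K,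
        (Nat.choose (K - 1) (l - 1) : ℝ) * a n l = M)
    ∧ (∀ n l, 0 ≤ a n l) := by
  have hl₀ : l₀ ≠ 0 := by omega
  have hl₀K : l₀ ≤ K := hl₀ub.trans (min_le_left _ _)
  have hn₀ltN : (n₀ : ℝ) < N := by exact_mod_cast (show n₀ < N by omega)
  have hupper : (K : ℝ) * M / l₀ < N :=
    div_lt_of_floor_div_lt (by linarith) (by omega) (by omega)
  have hlower : (n₀ : ℝ) < K * M / l₀ :=
    lt_div_of_lt_ceil_div (by exact_mod_cast hn₀1) (by omega)
      (by have := hl₀ub.trans (min_le_right _ _); omega)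
  set t := ((K : ℝ) * M / l₀ - n₀) / ((N : ℝ) - n₀)
  have ht₀ : 0 ≤ t := div_nonneg (by linarith) (by linarith)
  have ht₁ : t ≤ 1 := (div_le_one (by linarith)).mpr (by linarith)
  have ha : ∀ n, a n = levelPlacement K l₀ (if n ≤ n₀ then 1 else t) := by
    intro n; funext l
    rw [hadef]
    by_cases hn : n ≤ n₀ <;> by_cases hl : l = 0 <;>
      simp [levelPlacement, hn, hl, Ne.symm hl₀, div_eq_inv_mul, mul_comm]
  refine ⟨fun n _ => ?_, ?_, fun n l => ?_⟩
  · rw [ha]; exact sum_choose_mul_levelPlacement _ hl₀ hl₀K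
  · have hK : (K : ℝ) ≠ 0 := by exact_mod_cast (show K ≠ 0 by omega)
    have hfill : ((N : ℝ) - n₀) * t = K * M / l₀ - n₀ :=
      mul_div_cancel₀ _ (sub_ne_zero.mpr hn₀ltN.ne')
    simp only [ha, sum_choose_pred_mul_levelPlacement _ hl₀ hl₀K, ← mul_sum,
      sum_Icc_one_ite_le (show n₀ ≤ N by omega), hfill]
    field_simp
    ring
  · rw [ha]; split_ifs <;> exact levelPlacement_nonneg _ (by linarith) (by linarith) l

/-- Two-file-group Case-1 placement feasibility: for `n₀ ∈ {1,...,N−1}` and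
`⌊KM/N⌋+1 ≤ l₀ ≤ min{K, ⌈KM/n₀⌉−1}`, the placement
`a_{n,l₀} = 1/C(K,l₀)` for `n ≤ n₀`, and for `n > n₀`
`a_{n,0} = 1 − (KM/l₀ − n₀)/(N − n₀)`, `a_{n,l₀} = (1/C(K,l₀))·(KM/l₀ − n₀)/(N − n₀)`
(all other entries `0`) satisfies the file-partition constraint for every file, uses the full
cache memory `M`, and is nonnegative. -/
theorem two_group_case1_feasible (K N n₀ l₀ : ℕ) (M : ℝ) (hK : 1 ≤ K) (hN : 2 ≤ N)
    (hM0 : 0 < M) (hMN : M < N) (hn₀1 : 1 ≤ n₀) (hn₀N : n₀ ≤ N - 1)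
    (hl₀lb : Nat.floor ((K : ℝ) * M / N) + 1 ≤ l₀)
    (hl₀ub : l₀ ≤ min K (Nat.ceil ((K : ℝ) * M / n₀) - 1))
    (a : ℕ → ℕ → ℝ)
    (hadef : ∀ n l, a n l =
      if n ≤ n₀ then (if l = l₀ then 1 / (Nat.choose K l₀ : ℝ) else 0)
      else if l = 0 then 1 - ((K : ℝ) * M / l₀ - n₀) / ((N : ℝ) - n₀)
      else if l = l₀ then (1 / (Nat.choose K l₀ : ℝ)) * (((K : ℝ) * M / l₀ - n₀) / ((N : ℝ) - n₀))
      else 0) :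
    (∀ n ∈ Finset.Icc 1 N, ∑ l ∈ Finset.range (K + 1), (Nat.choose K l : ℝ) * a n l = 1)
    ∧ (∑ n ∈ Finset.Icc 1 N, ∑ l ∈ Finset.Icc 1 K,
        (Nat.choose (K - 1) (l - 1) : ℝ) * a n l = M)
    ∧ (∀ n l, 0 ≤ a n l) :=
  two_group_case1_feasible_general K N n₀ l₀ M hn₀1 hn₀N hl₀lb hl₀ub a hadef
end

section
/- Two-file-group Case-2 placement feasibility: for n_0 < N, l_0 ≠ l_1 in {1,...,K} with either (l_0 > KM/N and l_1 < KM/n_0) or (l_0 < KM/N and l_1 > KM/n_0), define t = (KM/l_1 − n_0)/((l_0/l_1)N − n_0); then the placement a_{n,l_0} = t/binom(K,l_0) for all n, a_{n,l_1} = ((l_0/l_1)N − KM/l_1)/(((l_0/l_1)N − n_0)·binom(K,l_1)) for n ≤ n_0, a_{n,0} = 1 − t for n > n_0 (all other entries 0) satisfies Σ_l binom(K,l) a_{n,l} = 1 for every n, Σ_{n=1}^{N} Σ_{l=1}^{K} binom(K−1,l−1) a_{n,l} = M, and all entries lie in [0,1]. -/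
/-!
Put `p = KM − n₀l₁` and `q = l₀N − KM`. The Case-2 condition says exactly that `p` and `q` have
the same strict sign, and clearing `l₁` from the given formulas shows `t = p / (p + q)` and
`C(K,l₁) a_{n,l₁} = q / (p + q) = 1 − t`. Hence `t ∈ [0,1]`, every file is split into parts of total
size `t + (1 − t) = 1`, and by `C(K−1,l−1) = (l/K) C(K,l)` the cache load is
`(N l₀ t + n₀ l₁ (1 − t)) / K = (n₀ l₁ + p) / K = M`.
-/

open Finset

section OrderedField

variable {𝕜 : Type*} [Field 𝕜] [LinearOrder 𝕜] [IsStrictOrderedRing 𝕜]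

lemma add_ne_zero_of_mul_pos {p q : 𝕜} (h : 0 < p * q) : p + q ≠ 0 := by
  rcases mul_pos_iff.mp h with ⟨hp, hq⟩ | ⟨hp, hq⟩
  · exact (add_pos hp hq).ne'
  · exact (add_neg hp hq).ne

lemma div_add_mem_Icc_of_mul_pos {p q : 𝕜} (h : 0 < p * q) : p / (p + q) ∈ Set.Icc 0 1 := by
  rcases mul_pos_iff.mp h with ⟨hp, hq⟩ | ⟨hp, hq⟩
  · exact ⟨by positivity, (div_le_one (by linarith)).mpr (by linarith)⟩
  · rw [← neg_div_neg_eq, neg_add]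
    exact ⟨div_nonneg (by linarith) (by linarith), (div_le_one (by linarith)).mpr (by linarith)⟩

lemma div_natCast_mem_Icc {x : 𝕜} (hx : x ∈ Set.Icc 0 1) (m : ℕ) : x / m ∈ Set.Icc 0 1 := by
  rcases m.eq_zero_or_pos with rfl | hm
  · simp
  · exact ⟨div_nonneg hx.1 m.cast_nonneg,
      div_le_one_of_le₀ (hx.2.trans (by exact_mod_cast hm)) m.cast_nonneg⟩

lemma sub_mul_sub_pos_of_case2 {c N n₀ l₀ l₁ : 𝕜} (hN : 0 < N) (hn₀ : 0 < n₀)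
    (h : (c / N < l₀ ∧ l₁ < c / n₀) ∨ (l₀ < c / N ∧ c / n₀ < l₁)) :
    0 < (c - n₀ * l₁) * (l₀ * N - c) := by
  rcases h with ⟨h₀, h₁⟩ | ⟨h₀, h₁⟩
  · rw [div_lt_iff₀ hN] at h₀
    rw [lt_div_iff₀ hn₀] at h₁
    exact mul_pos (by linarith) (by linarith)
  · rw [lt_div_iff₀ hN] at h₀
    rw [div_lt_iff₀ hn₀] at h₁
    exact mul_pos_of_neg_of_neg (by linarith) (by linarith)

end OrderedField

lemma Nat.cast_choose_pred_pred {R : Type*} [Field R] [CharZero R] {K l : ℕ}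
    (hl : 1 ≤ l) (hlK : l ≤ K) :
    ((K - 1).choose (l - 1) : R) = l / K * K.choose l := by
  have hK : (K : R) ≠ 0 := by exact_mod_cast (by omega : K ≠ 0)
  have h := Nat.add_one_mul_choose_eq (K - 1) (l - 1)
  rw [Nat.sub_add_cancel (hl.trans hlK), Nat.sub_add_cancel hl] at h
  rw [div_mul_eq_mul_div, eq_div_iff hK, mul_comm]
  exact_mod_cast h.trans (mul_comm _ _)

/-- The share of file `n` cached on each of the `C(K,l)` user subsets of size `l`. -/
def twoGroupPlacement {R : Type*} [Field R] (K n₀ l₀ l₁ : ℕ) (t : R) (n l : ℕ) : R :=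
  if l = l₀ then t / K.choose l₀
  else if n ≤ n₀ ∧ l = l₁ then (1 - t) / K.choose l₁
  else if n₀ < n ∧ l = 0 then 1 - t
  else 0

section TwoGroupPlacement

variable {R : Type*} [Field R] [CharZero R] {K n₀ l₀ l₁ : ℕ} (t : R)

lemma choose_mul_twoGroupPlacement (hl₀ : l₀ ∈ Icc 1 K) (hl₁ : l₁ ∈ Icc 1 K) (hll : l₀ ≠ l₁)
    (n l : ℕ) :
    K.choose l * twoGroupPlacement K n₀ l₀ l₁ t n l =
      (if l = l₀ then t else 0) + (if l = l₁ then (if n ≤ n₀ then 1 - t else 0) else 0)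
        + (if l = 0 then (if n₀ < n then 1 - t else 0) else 0) := by
  rw [mem_Icc] at hl₀ hl₁
  have h₀ : (K.choose l₀ : R) ≠ 0 := by exact_mod_cast (Nat.choose_pos hl₀.2).ne'
  have h₁ : (K.choose l₁ : R) ≠ 0 := by exact_mod_cast (Nat.choose_pos hl₁.2).ne'
  unfold twoGroupPlacement
  split_ifs <;> subst_vars <;> first | omega | (simp_all; done) | (field_simp; ring)

lemma twoGroupPlacement_row_sum (hl₀ : l₀ ∈ Icc 1 K) (hl₁ : l₁ ∈ Icc 1 K) (hll : l₀ ≠ l₁)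
    (n : ℕ) : ∑ l ∈ range (K + 1), (K.choose l : R) * twoGroupPlacement K n₀ l₀ l₁ t n l = 1 := by
  have h₀ : l₀ < K + 1 := Nat.lt_succ_of_le (mem_Icc.mp hl₀).2
  have h₁ : l₁ < K + 1 := Nat.lt_succ_of_le (mem_Icc.mp hl₁).2
  simp only [choose_mul_twoGroupPlacement t hl₀ hl₁ hll, sum_add_distrib, sum_ite_eq', mem_range,
    h₀, h₁, Nat.zero_lt_succ, if_true]
  split_ifs <;> first | omega | ring

lemma twoGroupPlacement_memory_sum (hl₀ : l₀ ∈ Icc 1 K) (hl₁ : l₁ ∈ Icc 1 K) (hll : l₀ ≠ l₁)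
    {N : ℕ} (hn₀N : n₀ ≤ N) :
    ∑ n ∈ Icc 1 N, ∑ l ∈ Icc 1 K,
        ((K - 1).choose (l - 1) : R) * twoGroupPlacement K n₀ l₀ l₁ t n l =
      (N * l₀ * t + n₀ * l₁ * (1 - t)) / K := by
  have hinner : ∀ n, ∑ l ∈ Icc 1 K,
      ((K - 1).choose (l - 1) : R) * twoGroupPlacement K n₀ l₀ l₁ t n l =
        l₀ / K * t + if n ≤ n₀ then l₁ / K * (1 - t) else 0 := by
    intro n
    rw [sum_congr rfl fun l hl => by
      rw [Nat.cast_choose_pred_pred (mem_Icc.mp hl).1 (mem_Icc.mp hl).2, mul_assoc,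
        choose_mul_twoGroupPlacement t hl₀ hl₁ hll]]
    simp only [mul_add, mul_ite, mul_zero, sum_add_distrib, sum_ite_eq', if_pos hl₀, if_pos hl₁]
    simp
  have hfilter : {n ∈ Icc 1 N | n ≤ n₀} = Icc 1 n₀ := by
    ext
    simp only [mem_filter, mem_Icc]
    omega
  simp only [hinner, sum_add_distrib, sum_const, ← sum_filter, hfilter, Nat.card_Icc,
    nsmul_eq_mul, Nat.add_sub_cancel]
  ring

end TwoGroupPlacement

lemma twoGroupPlacement_mem_Icc {𝕜 : Type*} [Field 𝕜] [LinearOrder 𝕜] [IsStrictOrderedRing 𝕜]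
    {K n₀ l₀ l₁ : ℕ} {t : 𝕜} (ht : t ∈ Set.Icc 0 1) (n l : ℕ) :
    twoGroupPlacement K n₀ l₀ l₁ t n l ∈ Set.Icc 0 1 := by
  have h1t : 1 - t ∈ Set.Icc 0 1 := ⟨sub_nonneg.2 ht.2, sub_le_self _ ht.1⟩
  unfold twoGroupPlacement
  split_ifs
  · exact div_natCast_mem_Icc ht _
  · exact div_natCast_mem_Icc h1t _
  · exact h1t
  · exact Set.left_mem_Icc.2 zero_le_one

theorem two_group_case2_feasible_general (K N n₀ l₀ l₁ : ℕ) (M t : ℝ)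
    (hn₀1 : 1 ≤ n₀) (hn₀N : n₀ ≤ N - 1)
    (hl₀ : l₀ ∈ Finset.Icc 1 K) (hl₁ : l₁ ∈ Finset.Icc 1 K) (hll : l₀ ≠ l₁)
    (hcond : ((K : ℝ) * M / N < l₀ ∧ (l₁ : ℝ) < (K : ℝ) * M / n₀)
      ∨ ((l₀ : ℝ) < (K : ℝ) * M / N ∧ (K : ℝ) * M / n₀ < l₁))
    (ht : t = ((K : ℝ) * M / l₁ - n₀) / (((l₀ : ℝ) / l₁) * N - n₀))
    (a : ℕ → ℕ → ℝ)
    (hadef : ∀ n l, a n l =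
      if l = l₀ then t / (Nat.choose K l₀ : ℝ)
      else if n ≤ n₀ ∧ l = l₁ then
        (((l₀ : ℝ) / l₁) * N - (K : ℝ) * M / l₁)
          / (((((l₀ : ℝ) / l₁) * N - n₀)) * (Nat.choose K l₁ : ℝ))
      else if n₀ < n ∧ l = 0 then 1 - t
      else 0) :
    (∀ n ∈ Finset.Icc 1 N, ∑ l ∈ Finset.range (K + 1), (Nat.choose K l : ℝ) * a n l = 1)
    ∧ (∑ n ∈ Finset.Icc 1 N, ∑ l ∈ Finset.Icc 1 K,
        (Nat.choose (K - 1) (l - 1) : ℝ) * a n l = M)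
    ∧ (∀ n l, 0 ≤ a n l ∧ a n l ≤ 1) := by
  have hN : (0 : ℝ) < N := by exact_mod_cast (by omega : 0 < N)
  have hn₀ : (0 : ℝ) < n₀ := by exact_mod_cast (by omega : 0 < n₀)
  have hl₁0 : (l₁ : ℝ) ≠ 0 := by exact_mod_cast (by have := (mem_Icc.mp hl₁).1; omega)
  have hK : (K : ℝ) ≠ 0 := by exact_mod_cast (by have := mem_Icc.mp hl₁; omega)
  set p : ℝ := K * M - n₀ * l₁ with hp
  set q : ℝ := l₀ * N - K * M with hq
  have hpq : 0 < p * q := sub_mul_sub_pos_of_case2 hN hn₀ hcond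
  have hD : p + q ≠ 0 := add_ne_zero_of_mul_pos hpq
  have hp' : (K : ℝ) * M / l₁ - n₀ = p / l₁ := by rw [hp]; field_simp
  have hq' : (l₀ : ℝ) / l₁ * N - K * M / l₁ = q / l₁ := by rw [hq]; field_simp
  have hpq' : (l₀ : ℝ) / l₁ * N - n₀ = (p + q) / l₁ := by rw [hp, hq]; field_simp; ring
  rw [hp', hpq', div_div_div_cancel_right₀ hl₁0] at ht
  have h1t : 1 - t = q / (p + q) := by rw [ht, one_sub_div hD, add_sub_cancel_left]
  have ha : a = twoGroupPlacement K n₀ l₀ l₁ t := by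
    funext n l
    rw [hadef, twoGroupPlacement, hq', hpq', ← div_div, div_div_div_cancel_right₀ hl₁0, h1t]
  subst ha
  refine ⟨fun n _ => twoGroupPlacement_row_sum t hl₀ hl₁ hll n, ?_,
    twoGroupPlacement_mem_Icc (ht ▸ div_add_mem_Icc_of_mul_pos hpq)⟩
  rw [twoGroupPlacement_memory_sum t hl₀ hl₁ hll (by omega), ht]
  field_simp
  rw [hp, hq]
  ring

/-- Two-file-group Case-2 placement feasibility: for `n₀ < N` and `l₀ ≠ l₁` in `{1,...,K}`
with either (`l₀ > KM/N` and `l₁ < KM/n₀`) or (`l₀ < KM/N` and `l₁ > KM/n₀`), let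
`t = (KM/l₁ − n₀)/((l₀/l₁)N − n₀)`.  The placement `a_{n,l₀} = t/C(K,l₀)` for all `n`,
`a_{n,l₁} = ((l₀/l₁)N − KM/l₁)/(((l₀/l₁)N − n₀)·C(K,l₁))` for `n ≤ n₀`, `a_{n,0} = 1 − t`
for `n > n₀` (all other entries `0`) satisfies the file-partition constraint for every file,
uses the full cache memory `M`, and has all entries in `[0,1]`. -/
theorem two_group_case2_feasible (K N n₀ l₀ l₁ : ℕ) (M t : ℝ) (hK : 1 ≤ K) (hN : 2 ≤ N)
    (hM0 : 0 < M) (hMN : M < N) (hn₀1 : 1 ≤ n₀) (hn₀N : n₀ ≤ N - 1)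
    (hl₀ : l₀ ∈ Finset.Icc 1 K) (hl₁ : l₁ ∈ Finset.Icc 1 K) (hll : l₀ ≠ l₁)
    (hcond : ((K : ℝ) * M / N < l₀ ∧ (l₁ : ℝ) < (K : ℝ) * M / n₀)
      ∨ ((l₀ : ℝ) < (K : ℝ) * M / N ∧ (K : ℝ) * M / n₀ < l₁))
    (ht : t = ((K : ℝ) * M / l₁ - n₀) / (((l₀ : ℝ) / l₁) * N - n₀))
    (a : ℕ → ℕ → ℝ)
    (hadef : ∀ n l, a n l =
      if l = l₀ then t / (Nat.choose K l₀ : ℝ)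
      else if n ≤ n₀ ∧ l = l₁ then
        (((l₀ : ℝ) / l₁) * N - (K : ℝ) * M / l₁)
          / (((((l₀ : ℝ) / l₁) * N - n₀)) * (Nat.choose K l₁ : ℝ))
      else if n₀ < n ∧ l = 0 then 1 - t
      else 0) :
    (∀ n ∈ Finset.Icc 1 N, ∑ l ∈ Finset.range (K + 1), (Nat.choose K l : ℝ) * a n l = 1)
    ∧ (∑ n ∈ Finset.Icc 1 N, ∑ l ∈ Finset.Icc 1 K,
        (Nat.choose (K - 1) (l - 1) : ℝ) * a n l = M)
    ∧ (∀ n l, 0 ≤ a n l ∧ a n l ≤ 1) :=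
  two_group_case2_feasible_general K N n₀ l₀ l₁ M t hn₀1 hn₀N hl₀ hl₁ hll hcond ht a hadef
end

section
/- For K = 2 and a feasible placement â, if files n_1 = φ(i_0) and n_2 = φ(i_0+1) satisfy p_{n_1} < p_{n_2} and â_{n_1,1} ≥ â_{n_2,1}, then swapping the l = 1 entries (adjusting the l = 0 entries to keep Σ_l binom(2,l) a_{n,l} = 1) does not increase the averaged lower bound; in particular the key per-case computation gives (p_{n_1}² + 2 p_{n_1} P' )(x₂ − x₁) + 4 p_{n_1} P'' (x₂ − x₁) + (p_{n_2}² + 2 p_{n_2} P')(x₁ − x₂) + 4 p_{n_2} P'' (x₁ − x₂) ≥ 0 when p_{n_1} < p_{n_2} and x₁ ≥ x₂ ≥ 0, where x₁ = â_{n_1,1}, x₂ = â_{n_2,1}, and P', P'' ≥ 0. -/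
/-- The `K = 2` lower bound `R_lb(D;a)` for a demand pair `(d₁,d₂)`. -/
noncomputable def Rlb2 (a : ℕ → ℕ → ℝ) (d₁ d₂ : ℕ) : ℝ :=
  if d₁ = d₂ then a d₁ 0 + a d₁ 1
  else a d₁ 0 + a d₂ 0 + max (a d₁ 1) (a d₂ 1)

/-- The averaged `K = 2` lower bound `R̄_lb(a)` over i.i.d. demands. -/
noncomputable def avgRlb2 (N : ℕ) (p : ℕ → ℝ) (a : ℕ → ℕ → ℝ) : ℝ :=
  ∑ d₁ ∈ Finset.Icc 1 N, ∑ d₂ ∈ Finset.Icc 1 N, p d₁ * p d₂ * Rlb2 a d₁ d₂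

/-!
Write `δ = â_{n₁,1} - â_{n₂,1} ≥ 0`. The swap only changes the terms of the average in which
`n₁` or `n₂` is demanded. On the diagonal it changes `p_{n₁}² R(n₁,n₁) + p_{n₂}² R(n₂,n₂)` by
`(p_{n₁}² - p_{n₂}²) δ ≤ 0`, and it leaves `R(n₁,n₂)` unchanged. For any other file `m`, with
`μ = max(â_{n₁,1}, â_{m,1}) - max(â_{n₂,1}, â_{m,1}) ≤ δ`, the pair of terms `(n₁,m), (n₂,m)`
changes by `p_m (p_{n₁} - p_{n₂}) (2δ - μ) ≤ 0`: the `l = 0` adjustment of size `2δ` outweighs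
what the maximum can gain.
-/

open Finset

section DoubleSum

variable {α M : Type*} [DecidableEq α] [AddCommMonoid M]

theorem Finset.sum_eq_add_add_sum_erase_erase {s : Finset α} {a b : α} (ha : a ∈ s) (hb : b ∈ s)
    (hab : a ≠ b) (f : α → M) :
    ∑ x ∈ s, f x = f a + f b + ∑ x ∈ (s.erase a).erase b, f x := by
  rw [← add_sum_erase s f ha, ← add_sum_erase _ f (mem_erase.2 ⟨hab.symm, hb⟩), add_assoc]

theorem Finset.sum_sum_eq_of_eq_zero_off {s : Finset α} {a b : α} (ha : a ∈ s) (hb : b ∈ s)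
    (hab : a ≠ b) (g : α → α → M)
    (hg : ∀ x ∈ (s.erase a).erase b, ∀ y ∈ (s.erase a).erase b, g x y = 0) :
    ∑ x ∈ s, ∑ y ∈ s, g x y = g a a + g a b + g b a + g b b
      + ∑ x ∈ (s.erase a).erase b, (g a x + g b x + g x a + g x b) := by
  have hrow : ∀ x ∈ (s.erase a).erase b, ∑ y ∈ s, g x y = g x a + g x b := fun x hx => by
    rw [sum_eq_add_add_sum_erase_erase ha hb hab, sum_eq_zero (hg x hx), add_zero]
  rw [sum_eq_add_add_sum_erase_erase ha hb hab, sum_congr rfl hrow,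
    sum_eq_add_add_sum_erase_erase ha hb hab, sum_eq_add_add_sum_erase_erase ha hb hab]
  simp only [sum_add_distrib]
  abel

end DoubleSum

theorem Rlb2_comm (a : ℕ → ℕ → ℝ) (d₁ d₂ : ℕ) : Rlb2 a d₁ d₂ = Rlb2 a d₂ d₁ := by
  by_cases h : d₁ = d₂
  · rw [h]
  · rw [Rlb2, Rlb2, if_neg h, if_neg (Ne.symm h), max_comm]
    ring

/-- The factor `2 = C(2,1)` keeps `∑_l C(2,l) a_{n,l}` unchanged for `n = n₁, n₂`. -/
structure IsK2Swap (ahat atil : ℕ → ℕ → ℝ) (n₁ n₂ : ℕ) : Prop where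
  swap₁ : atil n₁ 1 = ahat n₂ 1
  swap₂ : atil n₂ 1 = ahat n₁ 1
  adjust₁ : atil n₁ 0 = ahat n₁ 0 + 2 * (ahat n₁ 1 - ahat n₂ 1)
  adjust₂ : atil n₂ 0 = ahat n₂ 0 - 2 * (ahat n₁ 1 - ahat n₂ 1)
  rest : ∀ n, n ≠ n₁ → n ≠ n₂ → ∀ l, atil n l = ahat n l

namespace IsK2Swap

variable {ahat atil : ℕ → ℕ → ℝ} {n₁ n₂ : ℕ}

theorem Rlb2_eq_of_ne (h : IsK2Swap ahat atil n₁ n₂) {d m : ℕ} (hd₁ : d ≠ n₁) (hd₂ : d ≠ n₂)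
    (hm₁ : m ≠ n₁) (hm₂ : m ≠ n₂) : Rlb2 atil d m = Rlb2 ahat d m := by
  simp only [Rlb2, h.rest d hd₁ hd₂, h.rest m hm₁ hm₂]

theorem Rlb2_fst_fst (h : IsK2Swap ahat atil n₁ n₂) :
    Rlb2 atil n₁ n₁ = Rlb2 ahat n₁ n₁ + (ahat n₁ 1 - ahat n₂ 1) := by
  simp only [Rlb2, if_pos, h.adjust₁, h.swap₁]
  ring

theorem Rlb2_snd_snd (h : IsK2Swap ahat atil n₁ n₂) :
    Rlb2 atil n₂ n₂ = Rlb2 ahat n₂ n₂ - (ahat n₁ 1 - ahat n₂ 1) := by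
  simp only [Rlb2, if_pos, h.adjust₂, h.swap₂]
  ring

theorem Rlb2_fst_snd (h : IsK2Swap ahat atil n₁ n₂) (hne : n₁ ≠ n₂) :
    Rlb2 atil n₁ n₂ = Rlb2 ahat n₁ n₂ := by
  simp only [Rlb2, if_neg hne, h.adjust₁, h.adjust₂, h.swap₁, h.swap₂, max_comm (ahat n₂ 1)]
  ring

theorem mul_Rlb2_sub_add_mul_Rlb2_sub (h : IsK2Swap ahat atil n₁ n₂) {m : ℕ} (hm₁ : m ≠ n₁)
    (hm₂ : m ≠ n₂) (q₁ q₂ : ℝ) :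
    q₁ * (Rlb2 atil n₁ m - Rlb2 ahat n₁ m) + q₂ * (Rlb2 atil n₂ m - Rlb2 ahat n₂ m)
      = (q₁ - q₂) * (2 * (ahat n₁ 1 - ahat n₂ 1)
          - (max (ahat n₁ 1) (ahat m 1) - max (ahat n₂ 1) (ahat m 1))) := by
  simp only [Rlb2, if_neg hm₁.symm, if_neg hm₂.symm, h.rest m hm₁ hm₂, h.adjust₁, h.adjust₂,
    h.swap₁, h.swap₂]
  ring

theorem mul_Rlb2_sub_add_mul_Rlb2_sub_nonpos (h : IsK2Swap ahat atil n₁ n₂) {m : ℕ}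
    (hm₁ : m ≠ n₁) (hm₂ : m ≠ n₂) {q₁ q₂ : ℝ} (hq : q₁ ≤ q₂) (hx : ahat n₂ 1 ≤ ahat n₁ 1) :
    q₁ * (Rlb2 atil n₁ m - Rlb2 ahat n₁ m) + q₂ * (Rlb2 atil n₂ m - Rlb2 ahat n₂ m) ≤ 0 := by
  rw [h.mul_Rlb2_sub_add_mul_Rlb2_sub hm₁ hm₂]
  have hmax := (le_abs_self _).trans (abs_max_sub_max_le_abs (ahat n₁ 1) (ahat n₂ 1) (ahat m 1))
  rw [abs_of_nonneg (sub_nonneg.2 hx)] at hmax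
  exact mul_nonpos_of_nonpos_of_nonneg (sub_nonpos.2 hq) (by linarith)

theorem avgRlb2_le (h : IsK2Swap ahat atil n₁ n₂) {N : ℕ} {p : ℕ → ℝ} (hp : ∀ n, 0 ≤ p n)
    (hn₁ : n₁ ∈ Icc 1 N) (hn₂ : n₂ ∈ Icc 1 N) (hne : n₁ ≠ n₂) (hp12 : p n₁ ≤ p n₂)
    (hx : ahat n₂ 1 ≤ ahat n₁ 1) :
    avgRlb2 N p atil ≤ avgRlb2 N p ahat := by
  set E := ((Icc 1 N).erase n₁).erase n₂
  have hE : ∀ m ∈ E, m ≠ n₁ ∧ m ≠ n₂ := fun m hm => by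
    simp only [E, mem_erase] at hm
    exact ⟨hm.2.1, hm.1⟩
  set g := fun x y => p x * p y * (Rlb2 atil x y - Rlb2 ahat x y)
  have hdiff : avgRlb2 N p atil - avgRlb2 N p ahat = ∑ x ∈ Icc 1 N, ∑ y ∈ Icc 1 N, g x y := by
    simp only [g, avgRlb2, ← sum_sub_distrib, mul_sub]
  have hoff : ∀ x ∈ E, ∀ y ∈ E, g x y = 0 := fun x hx y hy => by
    simp only [g, h.Rlb2_eq_of_ne (hE x hx).1 (hE x hx).2 (hE y hy).1 (hE y hy).2, sub_self,
      mul_zero]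
  have hdiag : g n₁ n₁ + g n₂ n₂ = -((p n₂ - p n₁) * (p n₁ + p n₂) * (ahat n₁ 1 - ahat n₂ 1)) := by
    simp only [g, h.Rlb2_fst_fst, h.Rlb2_snd_snd]
    ring
  have hcross : g n₁ n₂ = 0 ∧ g n₂ n₁ = 0 := by
    simp only [g, Rlb2_comm _ n₂ n₁, h.Rlb2_fst_snd hne, sub_self, mul_zero, and_self]
  have hrow : ∀ m ∈ E, g n₁ m + g n₂ m + g m n₁ + g m n₂ ≤ 0 := fun m hm => by
    have hsum : g n₁ m + g n₂ m + g m n₁ + g m n₂ = 2 * p m * (p n₁ * (Rlb2 atil n₁ m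
        - Rlb2 ahat n₁ m) + p n₂ * (Rlb2 atil n₂ m - Rlb2 ahat n₂ m)) := by
      simp only [g, Rlb2_comm atil m, Rlb2_comm ahat m]
      ring
    rw [hsum]
    exact mul_nonpos_of_nonneg_of_nonpos (by linarith [hp m])
      (h.mul_Rlb2_sub_add_mul_Rlb2_sub_nonpos (hE m hm).1 (hE m hm).2 hp12 hx)
  have hgain : 0 ≤ (p n₂ - p n₁) * (p n₁ + p n₂) * (ahat n₁ 1 - ahat n₂ 1) :=
    mul_nonneg (mul_nonneg (sub_nonneg.2 hp12) (add_nonneg (hp n₁) (hp n₂))) (sub_nonneg.2 hx)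
  rw [← sub_nonpos, hdiff, sum_sum_eq_of_eq_zero_off hn₁ hn₂ hne g hoff]
  linarith [sum_nonpos hrow]

end IsK2Swap

theorem swap_gain_nonneg {p₁ p₂ x₁ x₂ P' P'' : ℝ} (hp₁ : 0 ≤ p₁) (hp : p₁ ≤ p₂) (hx : x₂ ≤ x₁)
    (hP' : 0 ≤ P') (hP'' : 0 ≤ P'') :
    0 ≤ (p₁ ^ 2 + 2 * p₁ * P') * (x₂ - x₁) + 4 * p₁ * P'' * (x₂ - x₁)
      + (p₂ ^ 2 + 2 * p₂ * P') * (x₁ - x₂) + 4 * p₂ * P'' * (x₁ - x₂) := by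
  have hfactor : (p₁ ^ 2 + 2 * p₁ * P') * (x₂ - x₁) + 4 * p₁ * P'' * (x₂ - x₁)
      + (p₂ ^ 2 + 2 * p₂ * P') * (x₁ - x₂) + 4 * p₂ * P'' * (x₁ - x₂)
      = (p₂ - p₁) * (p₁ + p₂ + 2 * P' + 4 * P'') * (x₁ - x₂) := by
    ring
  rw [hfactor]
  exact mul_nonneg (mul_nonneg (sub_nonneg.2 hp) (by linarith)) (sub_nonneg.2 hx)

theorem K2_swap_decreases_lb_general (N : ℕ) (p : ℕ → ℝ) (hp : ∀ n, 0 ≤ p n)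
    (ahat atil : ℕ → ℕ → ℝ)
    (n₁ n₂ : ℕ) (hn₁ : n₁ ∈ Finset.Icc 1 N) (hn₂ : n₂ ∈ Finset.Icc 1 N) (hne : n₁ ≠ n₂)
    (hp12 : p n₁ < p n₂) (hx : ahat n₂ 1 ≤ ahat n₁ 1)
    (hswap1 : atil n₁ 1 = ahat n₂ 1) (hswap2 : atil n₂ 1 = ahat n₁ 1)
    (hadj1 : atil n₁ 0 = ahat n₁ 0 + 2 * (ahat n₁ 1 - ahat n₂ 1))
    (hadj2 : atil n₂ 0 = ahat n₂ 0 - 2 * (ahat n₁ 1 - ahat n₂ 1))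
    (hrest : ∀ n, n ≠ n₁ → n ≠ n₂ → ∀ l, atil n l = ahat n l) :
    avgRlb2 N p atil ≤ avgRlb2 N p ahat
    ∧ ∀ P' P'' : ℝ, 0 ≤ P' → 0 ≤ P'' →
        0 ≤ (p n₁ ^ 2 + 2 * p n₁ * P') * (ahat n₂ 1 - ahat n₁ 1)
          + 4 * p n₁ * P'' * (ahat n₂ 1 - ahat n₁ 1)
          + (p n₂ ^ 2 + 2 * p n₂ * P') * (ahat n₁ 1 - ahat n₂ 1)
          + 4 * p n₂ * P'' * (ahat n₁ 1 - ahat n₂ 1) := by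
  have hswap : IsK2Swap ahat atil n₁ n₂ := ⟨hswap1, hswap2, hadj1, hadj2, hrest⟩
  exact ⟨hswap.avgRlb2_le hp hn₁ hn₂ hne hp12.le hx,
    fun _ _ hP' hP'' => swap_gain_nonneg (hp n₁) hp12.le hx hP' hP''⟩

/-- For `K = 2`: if `p_{n₁} < p_{n₂}` while `â_{n₁,1} ≥ â_{n₂,1}`, swapping the `l = 1`
entries of files `n₁, n₂` (adjusting the `l = 0` entries so that
`∑_l C(2,l) a_{n,l}` is preserved) does not increase the averaged lower bound; and the key
per-case computation: `(p₁² + 2p₁P')(x₂−x₁) + 4p₁P''(x₂−x₁) + (p₂² + 2p₂P')(x₁−x₂)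
+ 4p₂P''(x₁−x₂) ≥ 0` whenever `p₁ < p₂`, `x₁ ≥ x₂ ≥ 0`, `P', P'' ≥ 0`. -/
theorem K2_swap_decreases_lb (N : ℕ) (hN : 1 ≤ N) (p : ℕ → ℝ) (hp : ∀ n, 0 ≤ p n)
    (ahat atil : ℕ → ℕ → ℝ) (hahat : ∀ n l, 0 ≤ ahat n l)
    (n₁ n₂ : ℕ) (hn₁ : n₁ ∈ Finset.Icc 1 N) (hn₂ : n₂ ∈ Finset.Icc 1 N) (hne : n₁ ≠ n₂)
    (hp12 : p n₁ < p n₂) (hx : ahat n₂ 1 ≤ ahat n₁ 1)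
    (hswap1 : atil n₁ 1 = ahat n₂ 1) (hswap2 : atil n₂ 1 = ahat n₁ 1)
    (hadj1 : atil n₁ 0 = ahat n₁ 0 + 2 * (ahat n₁ 1 - ahat n₂ 1))
    (hadj2 : atil n₂ 0 = ahat n₂ 0 - 2 * (ahat n₁ 1 - ahat n₂ 1))
    (hfix2a : atil n₁ 2 = ahat n₁ 2) (hfix2b : atil n₂ 2 = ahat n₂ 2)
    (hrest : ∀ n, n ≠ n₁ → n ≠ n₂ → ∀ l, atil n l = ahat n l) :
    avgRlb2 N p atil ≤ avgRlb2 N p ahat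
    ∧ ∀ P' P'' : ℝ, 0 ≤ P' → 0 ≤ P'' →
        0 ≤ (p n₁ ^ 2 + 2 * p n₁ * P') * (ahat n₂ 1 - ahat n₁ 1)
          + 4 * p n₁ * P'' * (ahat n₂ 1 - ahat n₁ 1)
          + (p n₂ ^ 2 + 2 * p n₂ * P') * (ahat n₁ 1 - ahat n₂ 1)
          + 4 * p n₂ * P'' * (ahat n₁ 1 - ahat n₂ 1) :=
  K2_swap_decreases_lb_general N p hp ahat atil n₁ n₂ hn₁ hn₂ hne hp12 hx hswap1 hswap2 hadj1 hadj2
    hrest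
end

section
/- For K = 2 with files of possibly different sizes, for every demand vector d and any nonnegative placement a, the MCCS rate equals the uncoded-placement lower bound: if d_1 = d_2 = n then both equal a_{n,0} + a_{n,1}; if d_1 ≠ d_2 then both equal a_{d_1,0} + a_{d_2,0} + max(a_{d_1,1}, a_{d_2,1}). -/
/-! Both rates have closed forms for arbitrary placements and demands: with the single leader 1
the delivery serves the subsets `{1}` and `{1,2}`, with both users as leaders all three nonempty
subsets, and in the lower bound the two orderings differ only in which `a_{·,1}` they add. -/

/-- The `K = 2` MCCS delivery rate: sum over user subsets of `{1,2}` intersecting the leader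
group `U` of the zero-padded message sizes `max_{k∈S} a_{d_k,|S|−1}`. -/
noncomputable def RmccsTwo (a : ℕ → ℕ → ℝ) (d : ℕ → ℕ) (U : Finset ℕ) : ℝ :=
  ∑ S ∈ ((Finset.Icc 1 2).powerset.filter (fun S => (S ∩ U).Nonempty)).attach,
    S.1.sup' ((Finset.mem_filter.mp S.2).2.mono Finset.inter_subset_left)
      (fun k => a (d k) (S.1.card - 1))

/-- The `K = 2` uncoded-placement lower bound: maximum over the two orderings of
`∑_{l=0}^{1} ∑_{i=1}^{|D|} C(2−i,l) a_{π(i),l}`. -/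
noncomputable def RlbTwo (a : ℕ → ℕ → ℝ) (d₁ d₂ : ℕ) : ℝ :=
  if d₁ = d₂ then a d₁ 0 + a d₁ 1
  else max (a d₁ 0 + a d₂ 0 + a d₁ 1) (a d₁ 0 + a d₂ 0 + a d₂ 1)

theorem rmccsTwo_eq_sum (a : ℕ → ℕ → ℝ) (d : ℕ → ℕ) (U : Finset ℕ) :
    RmccsTwo a d U = ∑ S ∈ (Finset.Icc 1 2).powerset.filter (fun S => (S ∩ U).Nonempty),
      if h : S.Nonempty then S.sup' h (fun k => a (d k) (S.card - 1)) else 0 := by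
  rw [RmccsTwo,
    ← Finset.sum_attach ((Finset.Icc 1 2).powerset.filter (fun S => (S ∩ U).Nonempty))
    (fun S => if h : S.Nonempty then S.sup' h (fun k => a (d k) (S.card - 1)) else 0)]
  refine Finset.sum_congr rfl fun S _ => ?_
  rw [dif_pos ((Finset.mem_filter.mp S.2).2.mono Finset.inter_subset_left)]

theorem rmccsTwo_singleton_one (a : ℕ → ℕ → ℝ) (d : ℕ → ℕ) :
    RmccsTwo a d {1} = a (d 1) 0 + max (a (d 1) 1) (a (d 2) 1) := by
  rw [rmccsTwo_eq_sum, show (Finset.Icc 1 2).powerset.filter (fun S => (S ∩ {1}).Nonempty)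
    = {{1}, {1, 2}} by decide, Finset.sum_pair (by decide)]
  simp [Finset.sup'_insert]

theorem rmccsTwo_Icc (a : ℕ → ℕ → ℝ) (d : ℕ → ℕ) :
    RmccsTwo a d (Finset.Icc 1 2) = a (d 1) 0 + a (d 2) 0 + max (a (d 1) 1) (a (d 2) 1) := by
  rw [rmccsTwo_eq_sum, show (Finset.Icc 1 2).powerset.filter
    (fun S => (S ∩ Finset.Icc 1 2).Nonempty) = {{1}, {2}, {1, 2}} by decide,
    Finset.sum_insert (by decide), Finset.sum_pair (by decide)]
  simp [Finset.sup'_insert, add_assoc]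

theorem rlbTwo_self (a : ℕ → ℕ → ℝ) (n : ℕ) : RlbTwo a n n = a n 0 + a n 1 := if_pos rfl

theorem rlbTwo_of_ne (a : ℕ → ℕ → ℝ) {d₁ d₂ : ℕ} (h : d₁ ≠ d₂) :
    RlbTwo a d₁ d₂ = a d₁ 0 + a d₂ 0 + max (a d₁ 1) (a d₂ 1) := by
  rw [RlbTwo, if_neg h, max_add_add_left]

theorem K2_nonuniform_size_rate_eq_lb_general (a : ℕ → ℕ → ℝ) (d₁ d₂ : ℕ) :
    (d₁ = d₂ →
      RmccsTwo a (fun k => if k = 1 then d₁ else d₂) {1} = a d₁ 0 + a d₁ 1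
      ∧ RlbTwo a d₁ d₂ = a d₁ 0 + a d₁ 1)
    ∧ (d₁ ≠ d₂ →
      RmccsTwo a (fun k => if k = 1 then d₁ else d₂) (Finset.Icc 1 2)
          = a d₁ 0 + a d₂ 0 + max (a d₁ 1) (a d₂ 1)
      ∧ RlbTwo a d₁ d₂ = a d₁ 0 + a d₂ 0 + max (a d₁ 1) (a d₂ 1)) := by
  refine ⟨fun h => ?_, fun h => ⟨?_, rlbTwo_of_ne a h⟩⟩
  · subst h
    rw [rmccsTwo_singleton_one, rlbTwo_self]
    simp
  · simpa using rmccsTwo_Icc a (fun k => if k = 1 then d₁ else d₂)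

/-- For `K = 2` users with files of possibly different sizes `F_n`, for every demand vector
and any nonnegative placement, the MCCS rate equals the uncoded-placement lower bound:
if `d₁ = d₂ = n` both equal `a_{n,0} + a_{n,1}`; if `d₁ ≠ d₂` both equal
`a_{d₁,0} + a_{d₂,0} + max(a_{d₁,1}, a_{d₂,1})`. -/
theorem K2_nonuniform_size_rate_eq_lb (N : ℕ) (hN : 1 ≤ N) (F : ℕ → ℝ)
    (a : ℕ → ℕ → ℝ) (ha : ∀ n l, 0 ≤ a n l)
    (hpart : ∀ n ∈ Finset.Icc 1 N,
      ∑ l ∈ Finset.range 3, (Nat.choose 2 l : ℝ) * a n l = F n)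
    (d₁ d₂ : ℕ) (hd₁ : d₁ ∈ Finset.Icc 1 N) (hd₂ : d₂ ∈ Finset.Icc 1 N) :
    (d₁ = d₂ →
      RmccsTwo a (fun k => if k = 1 then d₁ else d₂) {1} = a d₁ 0 + a d₁ 1
      ∧ RlbTwo a d₁ d₂ = a d₁ 0 + a d₁ 1)
    ∧ (d₁ ≠ d₂ →
      RmccsTwo a (fun k => if k = 1 then d₁ else d₂) (Finset.Icc 1 2)
          = a d₁ 0 + a d₂ 0 + max (a d₁ 1) (a d₂ 1)
      ∧ RlbTwo a d₁ d₂ = a d₁ 0 + a d₂ 0 + max (a d₁ 1) (a d₂ 1)) :=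
  K2_nonuniform_size_rate_eq_lb_general a d₁ d₂
end
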